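/- In the event structure for (y=x; || x=y;), the set of configurations containing no event labelled with value 1 is closed under the well-justified construction steps: starting from the empty configuration and repeatedly adding a write event, or a read event justified by an existing write with matching location and value, one can never reach a configuration containing a label with value 1. -/
import Mathlib


/-- Locations. -/
inductive Lc where | x | y
deriving DecidableEq

/-- Memory actions over locations `Lc` and natural-number values. -/
inductive Act where
  | init : Act
  | read (l : Lc) (v : ℕ) : Act
  | write (l : Lc) (v : ℕ) : Act
deriving DecidableEq

/-- Events of the event structure for `(y=x; || x=y;)`. -/
inductive Ev where
  | einit | rx0 | rx1 | wy0 | wy1 | ry0 | ry1 | wx0 | wx1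
deriving DecidableEq

open Ev Act Lc

/-- Labelling of events. -/
def lab : Ev → Act
  | einit => .init
  | rx0 => .read .x 0
  | rx1 => .read .x 1
  | wy0 => .write .y 0
  | wy1 => .write .y 1
  | ry0 => .read .y 0
  | ry1 => .read .y 1
  | wx0 => .write .x 0
  | wx1 => .write .x 1

/-- Immediate program order: init < Rx0 < Wy0, init < Rx1 < Wy1,
init < Ry0 < Wx0, init < Ry1 < Wx1. -/
def po : Ev → Ev → Prop := fun d e =>
  (d = einit ∧ (e = rx0 ∨ e = rx1 ∨ e = ry0 ∨ e = ry1)) ∨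
  (d = rx0 ∧ e = wy0) ∨ (d = rx1 ∧ e = wy1) ∨
  (d = ry0 ∧ e = wx0) ∨ (d = ry1 ∧ e = wx1)

/-- Conflict: Rx0 # Rx1 and Ry0 # Ry1, inherited by program-order successors. -/
def confl : Ev → Ev → Prop := fun d e =>
  (d ∈ ({rx0, wy0} : Set Ev) ∧ e ∈ ({rx1, wy1} : Set Ev)) ∨
  (d ∈ ({rx1, wy1} : Set Ev) ∧ e ∈ ({rx0, wy0} : Set Ev)) ∨
  (d ∈ ({ry0, wx0} : Set Ev) ∧ e ∈ ({ry1, wx1} : Set Ev)) ∨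
  (d ∈ ({ry1, wx1} : Set Ev) ∧ e ∈ ({ry0, wx0} : Set Ev))

/-- A configuration: a finite, downward-closed, conflict-free set of events. -/
def IsConfig (C : Set Ev) : Prop :=
  C.Finite ∧ (∀ e ∈ C, ∀ d, po d e → d ∈ C) ∧ (∀ d ∈ C, ∀ e ∈ C, ¬ confl d e)

/-- Justification between labels: a read `R z v` is justified by a write
`W z v` with the same location and value, or (for `v = 0`) by the
initialization action, treated as writing `0` to all locations. -/
def labJust : Act → Act → Prop := fun d e =>
  ∃ z v, e = Act.read z v ∧ (d = Act.write z v ∨ (d = Act.init ∧ v = 0))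

/-- Well-justified configurations, generated inductively from the empty set by
adding non-read (write/init) events keeping the set a configuration, or read
events justified by a write (or init, as a value-0 write) already in the set. -/
inductive WJ : Set Ev → Prop where
  | empty : WJ ∅
  | write {C : Set Ev} {e : Ev} (hC : WJ C) (hcfg : IsConfig (insert e C))
      (hw : ∀ z v, lab e ≠ Act.read z v) : WJ (insert e C)
  | read {C : Set Ev} {e : Ev} (hC : WJ C) (hcfg : IsConfig (insert e C))
      (hr : ∃ z v, lab e = Act.read z v)
      (hj : ∃ d ∈ C, labJust (lab d) (lab e)) : WJ (insert e C)

/-- The well-justified construction can never reach a configuration containing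
a label with value `1`: every well-justified configuration of the event
structure for `(y=x; || x=y;)` contains no event labelled with value `1`. -/
theorem stmt16 (C : Set Ev) (hC : WJ C) :
    ∀ e ∈ C, ∀ z : Lc, lab e ≠ Act.read z 1 ∧ lab e ≠ Act.write z 1 := by
  induction hC with
  | empty => intro e he; exact absurd he (Set.notMem_empty e)
  | @write C e _ hcfg hw ih =>
      intro e' he' z
      rcases he' with rfl | he'
      · cases e' with
        | rx1 => exact absurd (hw .x 1 rfl) (by simp)
        | rx0 => exact absurd (hw .x 0 rfl) (by simp)
        | ry1 => exact absurd (hw .y 1 rfl) (by simp)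
        | ry0 => exact absurd (hw .y 0 rfl) (by simp)
        | wy1 =>
            have hpo : po rx1 wy1 := by right; right; left; exact ⟨rfl, rfl⟩
            have hin : rx1 ∈ insert wy1 C := hcfg.2.1 wy1 (Set.mem_insert _ _) rx1 hpo
            rcases hin with h | h
            · exact absurd h (by decide)
            · exact absurd (rfl : lab rx1 = Act.read .x 1) (ih rx1 h .x).1
        | wx1 =>
            have hpo : po ry1 wx1 := by right; right; right; right; exact ⟨rfl, rfl⟩
            have hin : ry1 ∈ insert wx1 C := hcfg.2.1 wx1 (Set.mem_insert _ _) ry1 hpo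
            rcases hin with h | h
            · exact absurd h (by decide)
            · exact absurd (rfl : lab ry1 = Act.read .y 1) (ih ry1 h .y).1
        | einit => cases z <;> exact ⟨by decide, by decide⟩
        | wy0 => cases z <;> exact ⟨by decide, by decide⟩
        | wx0 => cases z <;> exact ⟨by decide, by decide⟩
      · exact ih e' he' z
  | @read C e _ hcfg hr hj ih =>
      intro e' he' z
      rcases he' with rfl | he'
      · cases e' with
        | rx1 =>
            exfalso
            obtain ⟨d, hd, z', v', hrd, hw⟩ := hj
            have : z' = .x ∧ v' = 1 := by
              cases hrd.symm.trans (rfl : lab rx1 = Act.read .x 1); exact ⟨rfl, rfl⟩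
            obtain ⟨rfl, rfl⟩ := this
            rcases hw with hw | ⟨_, hv⟩
            · exact (ih d hd .x).2 hw
            · exact one_ne_zero hv
        | ry1 =>
            exfalso
            obtain ⟨d, hd, z', v', hrd, hw⟩ := hj
            have : z' = .y ∧ v' = 1 := by
              cases hrd.symm.trans (rfl : lab ry1 = Act.read .y 1); exact ⟨rfl, rfl⟩
            obtain ⟨rfl, rfl⟩ := this
            rcases hw with hw | ⟨_, hv⟩
            · exact (ih d hd .y).2 hw
            · exact one_ne_zero hv
        | einit => cases z <;> exact ⟨by decide, by decide⟩
        | rx0 => cases z <;> exact ⟨by decide, by decide⟩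
        | ry0 => cases z <;> exact ⟨by decide, by decide⟩
        | wy0 => cases z <;> exact ⟨by decide, by decide⟩
        | wx0 => cases z <;> exact ⟨by decide, by decide⟩
        | wy1 =>
            obtain ⟨z', v', h⟩ := hr
            simp [lab] at h
        | wx1 =>
            obtain ⟨z', v', h⟩ := hr
            simp [lab] at h
      · exact ih e' he' z
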